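/- If H is a subgroup of finite index in a group G and H has a finite complete rewriting system, then G has a finite complete rewriting system. -/

import Mathlib

/-!
Extend the alphabet of `H` by one letter for each nontrivial coset `Q` of `H`, evaluated at a
fixed representative `t_Q` (with `t_H = 1`). Besides the rules of `H`, add for every letter `c`
and nontrivial coset `Q` a rule `c t_Q → t_Q' w`, where `t_Q' w` (`w` a word of `H`) is a
representative of the product written coset letter first. The irreducible words are then
exactly the words `t_Q w₀` with `w₀` irreducible for `H`: unique normal forms for `g = t_Q h`.

For termination, cut a word at its coset letters into segments, which are words of `H`. Every rule
either lowers the number of segments, or keeps it and lowers the list of segments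
lexicographically, where a segment gets smaller by a rewriting step of `H` or by losing its last
letter. Since `H`'s system terminates, this order is well founded.
-/

/-- One step of rewriting: `w` rewrites to `w'` by replacing a factor `u`
(the left-hand side of a rule in `R`) with `v` (the right-hand side). -/
def RewStep {α : Type} (R : Set (FreeMonoid α × FreeMonoid α))
    (w w' : FreeMonoid α) : Prop :=
  ∃ x u v y : FreeMonoid α, (u, v) ∈ R ∧ w = x * u * y ∧ w' = x * v * y

/-- A word is irreducible if it contains no left-hand side of a rule as a factor. -/
def RewIrreducible {α : Type} (R : Set (FreeMonoid α × FreeMonoid α))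
    (w : FreeMonoid α) : Prop :=
  ¬ ∃ x u v y : FreeMonoid α, (u, v) ∈ R ∧ w = x * u * y

/-- `(π, R)` is a complete rewriting system for the group `G`:
(i) the induced monoid homomorphism `A* → G` is surjective and the monoid presented by
`⟨A ∣ u = v, (u,v) ∈ R⟩` maps isomorphically onto `G` (its defining congruence is exactly
the kernel congruence of the evaluation);
(ii) there is no infinite sequence of rewritings (Noetherian);
(iii) every element of `G` has exactly one irreducible representative word. -/
def IsCompleteRewritingSystem {α : Type} {G : Type*} [Group G] (π : α → G)
    (R : Set (FreeMonoid α × FreeMonoid α)) : Prop :=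
  Function.Surjective (FreeMonoid.lift π) ∧
  (∀ u v : FreeMonoid α,
      FreeMonoid.lift π u = FreeMonoid.lift π v ↔
        conGen (fun w w' => (w, w') ∈ R) u v) ∧
  (∀ f : ℕ → FreeMonoid α, ¬ ∀ m : ℕ, RewStep R (f m) (f (m + 1))) ∧
  (∀ g : G, ∃! w : FreeMonoid α, FreeMonoid.lift π w = g ∧ RewIrreducible R w)

/-- A group has a finite complete rewriting system if there are a finite alphabet `α`,
a map `π : α → G` and a finite set of rules `R` forming a complete rewriting system. -/
def HasFiniteCompleteRewritingSystem (G : Type*) [Group G] : Prop :=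
  ∃ (α : Type) (_ : Finite α) (π : α → G)
    (R : Set (FreeMonoid α × FreeMonoid α)),
    R.Finite ∧ IsCompleteRewritingSystem π R

theorem List.mem_tail_iff_exists_append_cons_cons {β : Type*} {l : List β} {x : β} :
    x ∈ l.tail ↔ ∃ l₁ d l₂, l = l₁ ++ d :: x :: l₂ := by
  constructor
  · intro hx
    obtain ⟨a, t, rfl⟩ :=
      List.exists_cons_of_ne_nil (List.ne_nil_of_mem (List.mem_of_mem_tail hx))
    obtain ⟨t₁, t₂, rfl⟩ := List.append_of_mem hx
    obtain h | ⟨l₁, d, h⟩ := List.eq_nil_or_concat (a :: t₁)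
    · exact absurd h (List.cons_ne_nil a t₁)
    · exact ⟨l₁, d, t₂, by rw [← List.cons_append, h]; simp⟩
  · rintro ⟨l₁, d, l₂, rfl⟩
    cases l₁ <;> simp

theorem List.exists_map_inl_eq {β γ : Type*} {l : List (β ⊕ γ)} (h : ∀ x ∈ l, x.isLeft) :
    ∃ l₀ : List β, l₀.map Sum.inl = l := by
  induction l with
  | nil => exact ⟨[], rfl⟩
  | cons c l ih =>
    obtain ⟨l₀, rfl⟩ := ih fun x hx => h x (List.mem_cons_of_mem c hx)
    rcases c with a | q
    · exact ⟨a :: l₀, rfl⟩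
    · simp at h

theorem WellFounded.or_of_exchange {β : Sort*} {r s : β → β → Prop} (hr : WellFounded r)
    (hs : WellFounded s) (hexch : ∀ a b c, r a b → s b c → ∃ d, s a d ∧ r d c) :
    WellFounded fun a b => r a b ∨ s a b := by
  have hacc : ∀ b, (∀ a, r a b → Acc (fun a b => r a b ∨ s a b) a) →
      Acc (fun a b => r a b ∨ s a b) b := by
    intro b hb
    induction hs.apply b with
    | intro b _ ih =>
      refine ⟨_, fun a hab => hab.elim (hb a) fun hsab => ih a hsab fun c hca => ?_⟩
      obtain ⟨d, hcd, hdb⟩ := hexch c a b hca hsab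
      exact (hb d hdb).inv (Or.inr hcd)
  exact ⟨fun b => hr.induction b fun b ih => hacc b ih⟩

section Rewriting

variable {α : Type} {R : Set (FreeMonoid α × FreeMonoid α)}

theorem RewStep.mul_mul {u v : FreeMonoid α} (h : RewStep R u v) (x y : FreeMonoid α) :
    RewStep R (x * u * y) (x * v * y) := by
  obtain ⟨a, b, c, d, hR, rfl, rfl⟩ := h
  exact ⟨x * a, b, c, d * y, hR, by simp only [mul_assoc], by simp only [mul_assoc]⟩

theorem RewStep.conGen {u v : FreeMonoid α} (h : RewStep R u v) :
    conGen (fun w w' => (w, w') ∈ R) u v := by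
  obtain ⟨x, a, b, y, hR, rfl, rfl⟩ := h
  set c := _root_.conGen fun w w' => (w, w') ∈ R
  exact c.mul (c.mul (c.refl x) (ConGen.Rel.of a b hR)) (c.refl y)

theorem wellFounded_rewStep_iff :
    (WellFounded fun a b => RewStep R b a) ↔
      ∀ f : ℕ → FreeMonoid α, ¬ ∀ m : ℕ, RewStep R (f m) (f (m + 1)) := by
  simp [wellFounded_iff_isEmpty_descending_chain, isEmpty_subtype]

theorem exists_rewIrreducible_reflTransGen (hwf : WellFounded fun a b => RewStep R b a)
    (w : FreeMonoid α) :
    ∃ w', RewIrreducible R w' ∧ Relation.ReflTransGen (RewStep R) w w' := by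
  induction w using hwf.induction with
  | _ w ih =>
    by_cases hw : RewIrreducible R w
    · exact ⟨w, hw, .refl⟩
    · obtain ⟨x, u, v, y, hR, rfl⟩ := not_not.mp hw
      have hstep : RewStep R (x * u * y) (x * v * y) := ⟨x, u, v, y, hR, rfl, rfl⟩
      obtain ⟨w', hw', hrw⟩ := ih _ hstep
      exact ⟨w', hw', .head hstep hrw⟩

theorem IsCompleteRewritingSystem.of_wellFounded {G : Type*} [Group G] {π : α → G}
    (hR : ∀ p ∈ R, FreeMonoid.lift π p.1 = FreeMonoid.lift π p.2)
    (hwf : WellFounded fun a b => RewStep R b a)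
    (huniq : ∀ g : G, ∃! w, FreeMonoid.lift π w = g ∧ RewIrreducible R w) :
    IsCompleteRewritingSystem π R := by
  have hker : conGen (fun w w' => (w, w') ∈ R) ≤ Con.ker (FreeMonoid.lift π) :=
    Con.conGen_le.mpr fun u v h => hR (u, v) h
  have hnf : ∀ w, ∃ w', RewIrreducible R w' ∧ conGen (fun w w' => (w, w') ∈ R) w w' := by
    intro w
    obtain ⟨w', hw', hrw⟩ := exists_rewIrreducible_reflTransGen hwf w
    exact ⟨w', hw', Relation.reflTransGen_le_of_equivalence_of_le (conGen _).iseqv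
      (fun _ _ h => h.conGen) _ _ hrw⟩
  refine ⟨fun g => (huniq g).exists.imp fun w hw => hw.1,
    fun u v => ⟨fun h => ?_, fun h => hker h⟩, wellFounded_rewStep_iff.mp hwf, huniq⟩
  obtain ⟨u', hu', hu⟩ := hnf u
  obtain ⟨v', hv', hv⟩ := hnf v
  have hlift : FreeMonoid.lift π u' = FreeMonoid.lift π v' := by
    rw [← hker hu, ← hker hv, h]
  have huv : u' = v' := (huniq _).unique ⟨rfl, hu'⟩ ⟨hlift.symm, hv'⟩
  exact (conGen _).trans hu (huv ▸ (conGen _).symm hv)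

end Rewriting

section Segments

variable {α δ : Type*}

def segments : List (α ⊕ δ) → List (FreeMonoid α)
  | [] => [1]
  | .inl a :: l => (FreeMonoid.of a * (segments l).headI) :: (segments l).tail
  | .inr _ :: l => 1 :: segments l

theorem segments_ne_nil : ∀ l : List (α ⊕ δ), segments l ≠ []
  | [] | .inl _ :: _ | .inr _ :: _ => List.cons_ne_nil _ _

theorem segments_map_inl_append (u : List α) (l : List (α ⊕ δ)) :
    segments (u.map Sum.inl ++ l) =
      (FreeMonoid.ofList u * (segments l).headI) :: (segments l).tail := by
  induction u with
  | nil =>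
    obtain ⟨s, S, hS⟩ := List.exists_cons_of_ne_nil (segments_ne_nil l)
    simp [hS]
  | cons a u ih => simp [segments, ih, FreeMonoid.ofList_cons, mul_assoc]

theorem shortlex_segments_cons {r : FreeMonoid α → FreeMonoid α → Prop}
    (hr : ∀ a s t, r s t → r (FreeMonoid.of a * s) (FreeMonoid.of a * t)) (c : α ⊕ δ)
    {m' m : List (α ⊕ δ)} (h : List.Shortlex r (segments m') (segments m)) :
    List.Shortlex r (segments (c :: m')) (segments (c :: m)) := by
  rcases c with a | q
  · obtain ⟨s', S', hm'⟩ := List.exists_cons_of_ne_nil (segments_ne_nil m')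
    obtain ⟨s, S, hm⟩ := List.exists_cons_of_ne_nil (segments_ne_nil m)
    simp only [segments, hm', hm, List.headI_cons, List.tail_cons] at h ⊢
    rcases List.shortlex_def.mp h with hlen | ⟨hlen, hlex⟩
    · exact .of_length_lt (by simpa using hlen)
    · refine .of_lex (by simpa using hlen) ?_
      cases hlex with
      | cons hlex => exact .cons hlex
      | rel hrel => exact .rel (hr a _ _ hrel)
  · rcases List.shortlex_def.mp h with hlen | ⟨hlen, hlex⟩
    · exact .of_length_lt (by simpa [segments] using hlen)
    · exact .of_lex (by simpa [segments] using hlen) (.cons hlex)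

theorem shortlex_segments_append_left {r : FreeMonoid α → FreeMonoid α → Prop}
    (hr : ∀ a s t, r s t → r (FreeMonoid.of a * s) (FreeMonoid.of a * t))
    {m' m : List (α ⊕ δ)} (h : List.Shortlex r (segments m') (segments m))
    (x : List (α ⊕ δ)) :
    List.Shortlex r (segments (x ++ m')) (segments (x ++ m)) := by
  induction x with
  | nil => exact h
  | cons c x ih => exact shortlex_segments_cons hr c ih

end Segments

section SegmentOrder

variable {α : Type} {R : Set (FreeMonoid α × FreeMonoid α)}

def SegmentLT (R : Set (FreeMonoid α × FreeMonoid α)) (s t : FreeMonoid α) : Prop :=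
  RewStep R t s ∨ ∃ a, t = s * FreeMonoid.of a

theorem SegmentLT.of_mul_of_mul (a : α) {s t : FreeMonoid α} (h : SegmentLT R s t) :
    SegmentLT R (FreeMonoid.of a * s) (FreeMonoid.of a * t) := by
  rcases h with h | ⟨b, rfl⟩
  · exact .inl (by simpa using h.mul_mul (FreeMonoid.of a) 1)
  · exact .inr ⟨b, (mul_assoc _ _ _).symm⟩

theorem wellFounded_segmentLT (hwf : WellFounded fun a b => RewStep R b a) :
    WellFounded (SegmentLT R) := by
  have hlen : WellFounded fun s t : FreeMonoid α => ∃ a, t = s * FreeMonoid.of a :=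
    Subrelation.wf (fun {s t} ⟨a, h⟩ => show s.length < t.length by
        simp [h, FreeMonoid.length_mul, FreeMonoid.length_of])
      (InvImage.wf FreeMonoid.length wellFounded_lt)
  refine hwf.or_of_exchange hlen fun s t u hst ⟨a, htu⟩ =>
    ⟨s * FreeMonoid.of a, ⟨a, rfl⟩, ?_⟩
  simpa [htu] using hst.mul_mul 1 (FreeMonoid.of a)

end SegmentOrder

namespace CosetRewriting

variable {G : Type} [Group G] (H : Subgroup G)

-- The trivial coset is represented by `1`, so that it needs no letter of its own.
open Classical in
noncomputable def cosetRep (Q : G ⧸ H) : G := if Q = ((1 : G) : G ⧸ H) then 1 else Q.out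

theorem mk_cosetRep (Q : G ⧸ H) : ((cosetRep H Q : G) : G ⧸ H) = Q := by
  unfold cosetRep
  split_ifs with h
  · exact h.symm
  · exact QuotientGroup.out_eq' Q

theorem cosetRep_one : cosetRep H ((1 : G) : G ⧸ H) = 1 := if_pos rfl

theorem cosetRep_inv_mul_mem (g : G) : (cosetRep H g)⁻¹ * g ∈ H :=
  QuotientGroup.eq.mp (mk_cosetRep H g)

abbrev Letter (α : Type) : Type := α ⊕ {Q : G ⧸ H // Q ≠ ((1 : G) : G ⧸ H)}

variable {α : Type} (π : α → H)

noncomputable def evalLetter : Letter H α → G := Sum.elim (fun a => π a) fun q => cosetRep H q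

abbrev embed : FreeMonoid α →* FreeMonoid (Letter H α) := FreeMonoid.map Sum.inl

open Classical in
noncomputable def cosetWord (Q : G ⧸ H) : FreeMonoid (Letter H α) :=
  if h : Q = ((1 : G) : G ⧸ H) then 1 else FreeMonoid.of (Sum.inr ⟨Q, h⟩)

noncomputable def normalWord (s : H → FreeMonoid α) (g : G) : FreeMonoid (Letter H α) :=
  cosetWord H g * embed H (s ⟨(cosetRep H g)⁻¹ * g, cosetRep_inv_mul_mem H g⟩)

noncomputable def rules (R : Set (FreeMonoid α × FreeMonoid α)) (s : H → FreeMonoid α) :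
    Set (FreeMonoid (Letter H α) × FreeMonoid (Letter H α)) :=
  Prod.map (embed H) (embed H) '' R ∪
    Set.range fun p : Letter H α × {Q : G ⧸ H // Q ≠ ((1 : G) : G ⧸ H)} =>
      (FreeMonoid.of p.1 * FreeMonoid.of (Sum.inr p.2),
        normalWord H s (evalLetter H π p.1 * cosetRep H p.2))

variable {H} {R : Set (FreeMonoid α × FreeMonoid α)} {s : H → FreeMonoid α}

theorem cosetWord_one : (cosetWord H ((1 : G) : G ⧸ H) : FreeMonoid (Letter H α)) = 1 :=
  dif_pos rfl

theorem cosetWord_coe (q : {Q : G ⧸ H // Q ≠ ((1 : G) : G ⧸ H)}) :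
    (cosetWord H q.1 : FreeMonoid (Letter H α)) = FreeMonoid.of (Sum.inr q) :=
  dif_neg q.2

theorem toList_cosetWord (Q : G ⧸ H) :
    (cosetWord H Q : FreeMonoid (Letter H α)).toList = [] ∨
      ∃ q, (cosetWord H Q : FreeMonoid (Letter H α)).toList = [Sum.inr q] := by
  unfold cosetWord
  split_ifs
  · exact .inl rfl
  · exact .inr ⟨_, rfl⟩

theorem lift_embed (w : FreeMonoid α) :
    FreeMonoid.lift (evalLetter H π) (embed H w) = FreeMonoid.lift π w := by
  have : (FreeMonoid.lift (evalLetter H π)).comp (embed H) = H.subtype.comp (FreeMonoid.lift π) :=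
    FreeMonoid.hom_eq fun _ => rfl
  exact DFunLike.congr_fun this w

theorem lift_cosetWord (Q : G ⧸ H) :
    FreeMonoid.lift (evalLetter H π) (cosetWord H Q) = cosetRep H Q := by
  unfold cosetWord
  split_ifs with h
  · rw [h, cosetRep_one, map_one]
  · rfl

theorem lift_normalWord (hs : Function.RightInverse s (FreeMonoid.lift π)) (g : G) :
    FreeMonoid.lift (evalLetter H π) (normalWord H s g) = g := by
  rw [normalWord, map_mul, lift_cosetWord, lift_embed, hs, mul_inv_cancel_left]

theorem lift_eq_of_mem_rules (hR : ∀ p ∈ R, FreeMonoid.lift π p.1 = FreeMonoid.lift π p.2)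
    (hs : Function.RightInverse s (FreeMonoid.lift π)) :
    ∀ p ∈ rules H π R s,
      FreeMonoid.lift (evalLetter H π) p.1 = FreeMonoid.lift (evalLetter H π) p.2 := by
  rintro _ (⟨p, hp, rfl⟩ | ⟨⟨c, q⟩, rfl⟩)
  · simp only [Prod.map_fst, Prod.map_snd, lift_embed, hR p hp]
  · simp only [map_mul, lift_normalWord π hs, FreeMonoid.lift_eval_of]
    rfl

theorem tail_isLeft_cosetWord_mul_embed (Q : G ⧸ H) (w₀ : FreeMonoid α) :
    ∀ x ∈ (cosetWord H Q * embed H w₀).toList.tail, x.isLeft := by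
  intro x hx
  have hx' : x ∈ (embed H w₀).toList := by
    rcases toList_cosetWord (α := α) Q with hQ | ⟨q, hQ⟩ <;>
      rw [FreeMonoid.toList_mul, hQ] at hx
    · exact List.mem_of_mem_tail hx
    · exact hx
  obtain ⟨a, -, rfl⟩ := List.mem_map.mp hx'
  rfl

theorem exists_eq_cosetWord_mul_embed {w : FreeMonoid (Letter H α)}
    (h : ∀ x ∈ w.toList.tail, x.isLeft) : ∃ Q w₀, w = cosetWord H Q * embed H w₀ := by
  rcases hw : w.toList with _ | ⟨c, t⟩
  · exact ⟨(1 : G), 1, by rw [cosetWord_one, map_one, one_mul]; exact hw⟩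
  rw [hw] at h
  obtain ⟨t₀, rfl⟩ := List.exists_map_inl_eq h
  rcases c with a | q
  · refine ⟨(1 : G), FreeMonoid.ofList (a :: t₀), ?_⟩
    rw [cosetWord_one, one_mul]
    exact hw
  · refine ⟨q.1, FreeMonoid.ofList t₀, ?_⟩
    rw [cosetWord_coe]
    exact hw

theorem tail_isLeft_of_rewIrreducible {w : FreeMonoid (Letter H α)}
    (hw : RewIrreducible (rules H π R s) w) : ∀ x ∈ w.toList.tail, x.isLeft := by
  intro x hx
  by_contra hleft
  obtain ⟨q, rfl⟩ : ∃ q, x = Sum.inr q := by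
    rcases x with a | q
    · simp at hleft
    · exact ⟨q, rfl⟩
  obtain ⟨l₁, c, l₂, hl⟩ := List.mem_tail_iff_exists_append_cons_cons.mp hx
  refine hw ⟨FreeMonoid.ofList l₁, _, _, FreeMonoid.ofList l₂, .inr ⟨(c, q), rfl⟩, ?_⟩
  exact FreeMonoid.toList.injective (by simpa [FreeMonoid.toList_mul] using hl)

theorem rewIrreducible_cosetWord_mul_embed_iff {Q : G ⧸ H} {w₀ : FreeMonoid α} :
    RewIrreducible (rules H π R s) (cosetWord H Q * embed H w₀) ↔ RewIrreducible R w₀ := by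
  constructor
  · rintro hw ⟨x, u, v, y, huv, rfl⟩
    refine hw ⟨cosetWord H Q * embed H x, embed H u, embed H v, embed H y,
      .inl ⟨(u, v), huv, rfl⟩, by simp only [map_mul, mul_assoc]⟩
  · rintro hw₀ ⟨x, u, v, y, (⟨⟨u₀, v₀⟩, huv, hu⟩ | ⟨⟨c, q⟩, hu⟩), hxuy⟩
    · -- erasing the coset letters turns this occurrence of `embed u₀` into one of `u₀`
      obtain rfl : embed H u₀ = u := congrArg Prod.fst hu
      let erase : FreeMonoid (Letter H α) →* FreeMonoid α :=
        FreeMonoid.lift (Sum.elim FreeMonoid.of 1)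
      have herase_embed : ∀ w, erase (embed H w) = w := fun w =>
        DFunLike.congr_fun (FreeMonoid.hom_eq (f := erase.comp (embed H)) (g := .id _)
          fun _ => rfl) w
      have herase_coset : erase (cosetWord H Q) = 1 := by
        unfold cosetWord
        split_ifs <;> rfl
      refine hw₀ ⟨erase x, u₀, v₀, erase y, huv, ?_⟩
      simpa [herase_embed, herase_coset] using congrArg erase hxuy
    · obtain rfl : FreeMonoid.of c * FreeMonoid.of (Sum.inr q) = u := congrArg Prod.fst hu
      have hq : Sum.inr q ∈ (x * (FreeMonoid.of c * FreeMonoid.of (Sum.inr q)) * y).toList.tail :=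
        List.mem_tail_iff_exists_append_cons_cons.mpr
          ⟨x.toList, c, y.toList, by simp [FreeMonoid.toList_mul]⟩
      rw [← hxuy] at hq
      exact absurd (tail_isLeft_cosetWord_mul_embed Q w₀ _ hq) (by simp)

theorem rewIrreducible_rules_iff {w : FreeMonoid (Letter H α)} :
    RewIrreducible (rules H π R s) w ↔
      ∃ Q w₀, RewIrreducible R w₀ ∧ w = cosetWord H Q * embed H w₀ := by
  constructor
  · intro hw
    obtain ⟨Q, w₀, rfl⟩ := exists_eq_cosetWord_mul_embed (tail_isLeft_of_rewIrreducible π hw)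
    exact ⟨Q, w₀, (rewIrreducible_cosetWord_mul_embed_iff π).mp hw, rfl⟩
  · rintro ⟨Q, w₀, hw₀, rfl⟩
    exact (rewIrreducible_cosetWord_mul_embed_iff π).mpr hw₀

theorem eq_of_lift_cosetWord_mul_embed {Q : G ⧸ H} {w₀ : FreeMonoid α} {g : G}
    (h : FreeMonoid.lift (evalLetter H π) (cosetWord H Q * embed H w₀) = g) :
    Q = g ∧
      FreeMonoid.lift π w₀ = ⟨(cosetRep H g)⁻¹ * g, cosetRep_inv_mul_mem H g⟩ := by
  rw [map_mul, lift_cosetWord, lift_embed] at h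
  obtain rfl : Q = g := by
    rw [← h, QuotientGroup.mk_mul_of_mem _ (FreeMonoid.lift π w₀).2, mk_cosetRep]
  exact ⟨rfl, Subtype.ext (eq_inv_mul_of_mul_eq h)⟩

theorem existsUnique_rewIrreducible_rules
    (huniq : ∀ h : H, ∃! w, FreeMonoid.lift π w = h ∧ RewIrreducible R w) (g : G) :
    ∃! w, FreeMonoid.lift (evalLetter H π) w = g ∧ RewIrreducible (rules H π R s) w := by
  obtain ⟨w₀, ⟨hw₀, hirr⟩, huniq₀⟩ :=
    huniq ⟨(cosetRep H g)⁻¹ * g, cosetRep_inv_mul_mem H g⟩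
  refine ⟨cosetWord H g * embed H w₀,
    ⟨?_, (rewIrreducible_rules_iff π).mpr ⟨_, _, hirr, rfl⟩⟩, ?_⟩
  · rw [map_mul, lift_cosetWord, lift_embed, hw₀, mul_inv_cancel_left]
  · rintro w ⟨hlift, hw⟩
    obtain ⟨Q, w₁, hirr₁, rfl⟩ := (rewIrreducible_rules_iff π).mp hw
    obtain ⟨rfl, hw₁⟩ := eq_of_lift_cosetWord_mul_embed π hlift
    rw [huniq₀ w₁ ⟨hw₁, hirr₁⟩]

theorem shortlex_segments_of_mem_rules {u v : FreeMonoid (Letter H α)}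
    (huv : (u, v) ∈ rules H π R s) (Y : List (Letter H α)) :
    List.Shortlex (SegmentLT R) (segments (v.toList ++ Y)) (segments (u.toList ++ Y)) := by
  obtain ⟨t, T, hY⟩ := List.exists_cons_of_ne_nil (segments_ne_nil Y)
  rcases huv with ⟨⟨u₀, v₀⟩, hR, huv⟩ | ⟨⟨c, q⟩, huv⟩ <;>
    obtain ⟨rfl, rfl⟩ := Prod.ext_iff.mp huv
  · simp only [Prod.map_fst, Prod.map_snd, FreeMonoid.toList_map, segments_map_inl_append, hY,
      List.headI_cons, List.tail_cons]
    exact .of_lex rfl (.rel (.inl ⟨1, u₀, v₀, t, hR, by simp, by simp⟩))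
  · rcases toList_cosetWord (α := α) ((evalLetter H π c * cosetRep H q : G) : G ⧸ H)
      with hQ | ⟨q', hQ⟩ <;>
      rcases c with a | r <;>
      simp only [normalWord, FreeMonoid.toList_mul, FreeMonoid.toList_of, FreeMonoid.toList_map,
        hQ, List.nil_append, List.cons_append, segments,
        segments_map_inl_append, hY, List.headI_cons, List.tail_cons, mul_one]
    · exact .of_length_lt (by simp)
    · exact .of_length_lt (by simp)
    · exact .of_lex (by simp) (.rel (.inr ⟨a, (one_mul _).symm⟩))
    · exact .of_length_lt (by simp)

theorem wellFounded_rules (hwf : WellFounded fun a b => RewStep R b a) :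
    WellFounded fun a b => RewStep (rules H π R s) b a := by
  refine Subrelation.wf (fun {w' w} hstep => ?_)
    (InvImage.wf (fun w => segments w.toList) (List.Shortlex.wf (wellFounded_segmentLT hwf)))
  obtain ⟨x, u, v, y, huv, rfl, rfl⟩ := hstep
  simp only [InvImage, FreeMonoid.toList_mul, List.append_assoc]
  exact shortlex_segments_append_left (fun a _ _ => SegmentLT.of_mul_of_mul a)
    (shortlex_segments_of_mem_rules π huv y.toList) x.toList

theorem finite_rules [Finite α] [Finite (G ⧸ H)] (hR : R.Finite) : (rules H π R s).Finite :=
  (hR.image _).union (Set.finite_range _)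

end CosetRewriting

/-- If H is a finite index subgroup of G and H has a finite complete
rewriting system, then so does G. -/
theorem finiteIndex_hasFiniteCompleteRewritingSystem
    (G : Type) [Group G] (H : Subgroup G) (hfi : H.FiniteIndex)
    (hH : HasFiniteCompleteRewritingSystem H) :
    HasFiniteCompleteRewritingSystem G := by
  obtain ⟨α, _, π, R, hRfin, hsurj, hcong, hnoeth, huniq⟩ := hH
  have hR : ∀ p ∈ R, FreeMonoid.lift π p.1 = FreeMonoid.lift π p.2 :=
    fun p hp => (hcong _ _).mpr (ConGen.Rel.of _ _ hp)
  refine ⟨CosetRewriting.Letter H α, inferInstance, CosetRewriting.evalLetter H π,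
    CosetRewriting.rules H π R (Function.surjInv hsurj), CosetRewriting.finite_rules π hRfin,
    .of_wellFounded ?_ ?_ (CosetRewriting.existsUnique_rewIrreducible_rules π huniq)⟩
  · exact CosetRewriting.lift_eq_of_mem_rules π hR (Function.rightInverse_surjInv hsurj)
  · exact CosetRewriting.wellFounded_rules π (wellFounded_rewStep_iff.mpr hnoeth)
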